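/- arXiv:1608.04858 — 7 statements merged into one kernel-verified Lean document; each statement's English description precedes it below -/
import Mathlib

section
/- Let λ be a real number and x a real number. Suppose (B_{n,λ}(x))_{n≥0} and (B*_{n,λ}(x))_{n≥0} are families of real numbers satisfying, in ℝ[[t]], the identities (Σ_{n≥0} B_{n,λ}(x) tⁿ/n!)·(exp(L_λ(t)) − 1) = L_λ(t)·exp(x·L_λ(t)) and (Σ_{n≥0} B*_{n,λ}(x) tⁿ/n!)·(exp(L_λ(t)) − 1) = t·exp(x·L_λ(t)). Then for every n ≥ 0, B*_{n,λ}(x) = Σ_{l=0}^n C(n,l) λ^l b_l B_{n−l,λ}(x), where b_l are the Bernoulli numbers of the second kind. -/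
open PowerSeries

/-- `L_λ(t) = Σ_{k≥1} (-1)^(k-1) λ^(k-1) t^k / k`, the formal series of `(1/λ)log(1+λt)`. -/
noncomputable def Lser (lam : ℝ) : PowerSeries ℝ :=
  PowerSeries.mk fun k => if k = 0 then 0 else (-1) ^ (k - 1) * lam ^ (k - 1) / k

/-- The formal exponential `Σ_{m≥0} S^m/m!` of a power series `S` with zero constant term;
since `coeff n (S^m) = 0` for `m > n`, each coefficient is the finite sum below. -/
noncomputable def expPS (S : PowerSeries ℝ) : PowerSeries ℝ :=
  PowerSeries.mk fun n =>
    ∑ m ∈ Finset.range (n + 1), (PowerSeries.coeff n (S ^ m)) / m.factorial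

/-- The formal series `log(1+t) = Σ_{k≥1} (-1)^(k-1) t^k / k`. -/
noncomputable def logOnePlus : PowerSeries ℝ :=
  PowerSeries.mk fun k => if k = 0 then 0 else (-1) ^ (k - 1) / k

/-! Write `log(1+t) = t·g(t)`; then `L_λ(t) = t·g(λt)`, a form that also covers `λ = 0`.
Substituting `t ↦ λt` in `(Σ bₙ tⁿ/n!)·t·g(t) = t`, after cancelling `t`, gives
`(Σ λⁿbₙ tⁿ/n!)·L_λ(t) = t`. Multiplying Kim's identity by `Σ λⁿbₙ tⁿ/n!` therefore produces the
right-hand side of Carlitz's, and cancelling the nonzero series `exp(L_λ(t)) − 1` shows that the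
generating function of `B*` is the product of those of `λⁿbₙ` and `Bₙ`. Comparing coefficients of
`tⁿ/n!` gives the binomial convolution. -/

namespace PowerSeries

variable {R : Type*} [CommRing R]

theorem rescale_mul_X_mul_rescale_eq_X {f g : R⟦X⟧} (a : R) (h : f * (X * g) = X) :
    rescale a f * (X * rescale a g) = X := by
  have hfg : f * g = 1 := X_mul_cancel (by rw [mul_one, mul_left_comm]; exact h)
  rw [mul_left_comm, ← map_mul, hfg, map_one, mul_one]

theorem coeff_mul_mk_div_factorial {K : Type*} [Field K] [CharZero K] (a d : ℕ → K) (n : ℕ) :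
    coeff n ((mk fun n => a n / n.factorial) * mk fun n => d n / n.factorial) =
      (∑ l ∈ Finset.range (n + 1), (n.choose l : K) * a l * d (n - l)) / n.factorial := by
  rw [coeff_mul, Finset.Nat.sum_antidiagonal_eq_sum_range_succ
    (fun i j => coeff i (mk fun n => a n / n.factorial) * coeff j (mk fun n => d n / n.factorial)),
    Finset.sum_div]
  refine Finset.sum_congr rfl fun l hl => ?_
  have hln : l ≤ n := Nat.lt_succ_iff.mp (Finset.mem_range.mp hl)
  rw [coeff_mk, coeff_mk, Nat.cast_choose K hln]
  field_simp
  exact (mul_div_mul_right _ _ (Nat.cast_ne_zero.mpr n.factorial_ne_zero)).symm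

end PowerSeries

open PowerSeries

theorem Lser_eq_X_mul_rescale (lam : ℝ) :
    Lser lam = X * rescale lam (mk fun k => (-1) ^ k / (k + 1)) := by
  ext k
  rcases k with _ | k
  · simp [Lser]
  · simp only [Lser, coeff_mk, Nat.add_eq_zero_iff, one_ne_zero, and_false, ↓reduceIte,
      add_tsub_cancel_right, Nat.cast_add, Nat.cast_one, coeff_succ_X_mul, coeff_rescale]
    ring

theorem logOnePlus_eq_Lser_one : logOnePlus = Lser 1 := by
  simp [logOnePlus, Lser]

theorem coeff_one_expPS_Lser (lam : ℝ) : coeff 1 (expPS (Lser lam)) = 1 := by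
  simp [expPS, Lser, Finset.sum_range_succ, coeff_one]

theorem rescale_mk_mul_Lser_eq_X (a : ℝ) {c : ℕ → ℝ} (h : mk c * logOnePlus = X) :
    (mk fun n => a ^ n * c n) * Lser a = X := by
  rw [logOnePlus_eq_Lser_one, Lser_eq_X_mul_rescale, rescale_one] at h
  rw [Lser_eq_X_mul_rescale, ← rescale_mk]
  exact rescale_mul_X_mul_rescale_eq_X a h

theorem carlitz_degenerate_eq_sum_kim_degenerate (lam x : ℝ) (B Bstar b : ℕ → ℝ)
    (hb : (PowerSeries.mk fun n => b n / n.factorial) * logOnePlus = PowerSeries.X)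
    (hB : (PowerSeries.mk fun n => B n / n.factorial) * (expPS (Lser lam) - 1) =
      Lser lam * expPS (PowerSeries.C x * Lser lam))
    (hBstar : (PowerSeries.mk fun n => Bstar n / n.factorial) * (expPS (Lser lam) - 1) =
      PowerSeries.X * expPS (PowerSeries.C x * Lser lam)) :
    ∀ n : ℕ, Bstar n =
      ∑ l ∈ Finset.range (n + 1), (n.choose l : ℝ) * lam ^ l * b l * B (n - l) := by
  have hb_scaled : (mk fun n => lam ^ n * b n / n.factorial) * Lser lam = X := by
    simpa only [mul_div_assoc] using rescale_mk_mul_Lser_eq_X lam hb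
  have hexp : expPS (Lser lam) - 1 ≠ 0 := fun h => by
    simpa [coeff_one_expPS_Lser] using congrArg (coeff 1) h
  have hgen : (mk fun n => Bstar n / n.factorial) =
      (mk fun n => lam ^ n * b n / n.factorial) * mk fun n => B n / n.factorial := by
    refine mul_right_cancel₀ hexp ?_
    rw [hBstar, mul_assoc, hB, ← mul_assoc, hb_scaled]
  intro n
  have hn := congrArg (coeff n) hgen
  rw [coeff_mk, coeff_mul_mk_div_factorial, div_left_inj' (by positivity)] at hn
  rw [hn]
  exact Finset.sum_congr rfl fun l _ => by ring
end

section
/- Let q be a real number with q > 0 and q ≠ 1, let w be a positive integer, and let (β_{n,q})_{n≥0} and (β_{n,q^w})_{n≥0} be the Carlitz Bernoulli numbers for parameters q and q^w respectively (each satisfying the Carlitz recurrence for its parameter). Then for every n ≥ 0 and every real x, β_{n,q}(wx) = [w]_q^{n−1} · Σ_{j=0}^{w−1} q^j · β_{n,q^w}(x + j/w). -/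
/-- The `q`-number `[y]_q = (1 - q^y)/(1 - q)`, using the real power `q ^ y`. -/
noncomputable def qnum (q y : ℝ) : ℝ := (1 - q ^ y) / (1 - q)

/-- `β` satisfies the Carlitz recurrence for parameter `Q`:
`β₀ = 1` and `Q(Qβ+1)^n - β_n = 1` if `n = 1`, `= 0` if `n > 1`. -/
def CarlitzRec (Q : ℝ) (β : ℕ → ℝ) : Prop :=
  β 0 = 1 ∧ ∀ n : ℕ, 1 ≤ n →
    Q * (∑ l ∈ Finset.range (n + 1), (n.choose l : ℝ) * Q ^ l * β l) - β n =
      if n = 1 then 1 else 0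

/-- The Carlitz `Q`-Bernoulli polynomial `β_{n,Q}(x) = Σ_l C(n,l) [x]_Q^{n-l} Q^{lx} β_l`. -/
noncomputable def carlitzPoly (Q : ℝ) (β : ℕ → ℝ) (n : ℕ) (x : ℝ) : ℝ :=
  ∑ l ∈ Finset.range (n + 1),
    (n.choose l : ℝ) * qnum Q x ^ (n - l) * Q ^ ((l : ℝ) * x) * β l

/-!
When `q` is not a root of unity the Carlitz recurrence determines `β_{n,q}`, since its `n`-th
equation reads `(q^{n+1} - 1) β_n = (terms in β_0, …, β_{n-1})`. The solution is
`β_{n,q} = (1 - q)^{-n} Σ_m C(n,m) (-1)^m (m+1)/[m+1]_q`, i.e. umbrally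
`(1 - q)^l β_l = (1 - c)^l` with `c^m = (m+1)/[m+1]_q`. Binomial sums
`Σ_l C(n,l) u^{n-l} v^l β_l` therefore collapse to a single sum over `m`: the recurrence reduces
to `Σ_m C(n,m) (-1)^m (m+1) = -[n = 1]`, and the Carlitz polynomial becomes the exponential sum
`β_{n,q}(x) = (1 - q)^{-n} Σ_m C(n,m) (-1)^m (m+1)/[m+1]_q · q^{mx}`.
In the multiplication formula the sum over `j` then only produces geometric sums
`Σ_j q^{(m+1)j} = [w]_{q^{m+1}}`, and `[w]_{q^{m+1}} / [m+1]_{q^w} = [w]_q / [m+1]_q` since both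
equal `(1 - q^w) / (1 - q^{m+1})`.
-/

open Finset

section Binomial

variable {R : Type*}

theorem sum_choose_mul_sum_choose [CommSemiring R] (n : ℕ) (u v : R) (f : ℕ → R) :
    ∑ l ∈ range (n + 1), (n.choose l : R) * u ^ (n - l) *
        ∑ m ∈ range (l + 1), (l.choose m : R) * v ^ (l - m) * f m =
      ∑ m ∈ range (n + 1), (n.choose m : R) * (u + v) ^ (n - m) * f m := by
  simp_rw [mul_sum, range_eq_Ico]
  rw [← sum_Ico_Ico_comm]
  refine sum_congr rfl fun m hm => ?_
  have hmn : m ≤ n := Nat.lt_succ_iff.1 (mem_Ico.1 hm).2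
  rw [sum_Ico_eq_sum_range, show n + 1 - m = n - m + 1 by omega, add_comm u v, add_pow, mul_sum,
    sum_mul]
  refine sum_congr rfl fun k hk => ?_
  have hchoose : (n.choose (m + k) * (m + k).choose m : R) = n.choose m * (n - m).choose k := by
    have h := Nat.choose_mul (n := n) (k := m + k) (s := m) (by omega)
    rw [Nat.add_sub_cancel_left] at h
    exact_mod_cast congrArg (Nat.cast : ℕ → R) h
  rw [show n - (m + k) = n - m - k by omega, Nat.add_sub_cancel_left]
  calc _ = (n.choose (m + k) * (m + k).choose m : R) * (u ^ (n - m - k) * v ^ k * f m) := by ring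
    _ = _ := by rw [hchoose]; ring

theorem sum_neg_one_pow_mul_choose_mul [CommRing R] (n : ℕ) :
    ∑ m ∈ range (n + 1), (-1 : R) ^ m * n.choose m * m = if n = 1 then -1 else 0 := by
  cases n with
  | zero => simp
  | succ p =>
    have hterm (m : ℕ) :
        (-1 : R) ^ (m + 1) * ((p + 1).choose (m + 1) : R) * ((m + 1 : ℕ) : R) =
          -(p + 1) * ((-1) ^ m * p.choose m) := by
      have h := congrArg (Nat.cast : ℕ → R) (Nat.add_one_mul_choose_eq p m)
      push_cast at h ⊢
      linear_combination (-1 : R) ^ m * h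
    have halt : ∑ m ∈ range (p + 1), (-1 : R) ^ m * p.choose m = if p = 0 then 1 else 0 := by
      simpa using congrArg (Int.cast : ℤ → R) (Int.alternating_sum_range_choose (n := p))
    rw [sum_range_succ', sum_congr rfl fun m _ => hterm m, ← mul_sum, halt]
    split_ifs <;> simp_all

end Binomial

theorem one_sub_pow_ne_zero_of_not_isOfFinOrder {R : Type*} [Ring R] {x : R}
    (hx : ¬IsOfFinOrder x) {k : ℕ} (hk : k ≠ 0) : 1 - x ^ k ≠ 0 :=
  sub_ne_zero.2 fun h => hx (isOfFinOrder_iff_pow_eq_one.2 ⟨k, Nat.pos_of_ne_zero hk, h.symm⟩)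

noncomputable def carlitzCoeff (Q : ℝ) (m : ℕ) : ℝ := (m + 1) * (1 - Q) / (1 - Q ^ (m + 1))

noncomputable def carlitzBernoulli (Q : ℝ) (n : ℕ) : ℝ :=
  (1 - Q)⁻¹ ^ n * ∑ m ∈ range (n + 1), (n.choose m : ℝ) * (-1) ^ m * carlitzCoeff Q m

theorem sum_choose_mul_pow_mul_carlitzBernoulli (Q u v : ℝ) (n : ℕ) :
    ∑ l ∈ range (n + 1), (n.choose l : ℝ) * u ^ (n - l) * v ^ l * carlitzBernoulli Q l =
      ∑ m ∈ range (n + 1), (n.choose m : ℝ) * (u + v / (1 - Q)) ^ (n - m) *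
        ((-(v / (1 - Q))) ^ m * carlitzCoeff Q m) := by
  rw [← sum_choose_mul_sum_choose]
  refine sum_congr rfl fun l _ => ?_
  rw [carlitzBernoulli, mul_assoc _ (v ^ l), mul_sum, mul_sum]
  refine congrArg _ (sum_congr rfl fun m hm => ?_)
  rw [← pow_sub_mul_pow v (Nat.lt_succ_iff.1 (mem_range.1 hm)),
    ← pow_sub_mul_pow (1 - Q)⁻¹ (Nat.lt_succ_iff.1 (mem_range.1 hm))]
  ring

theorem CarlitzRec.unique {Q : ℝ} (hQ : ¬IsOfFinOrder Q) {β β' : ℕ → ℝ}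
    (h : CarlitzRec Q β) (h' : CarlitzRec Q β') : β = β' := by
  funext n
  induction n using Nat.strong_induction_on with
  | _ n ih =>
    rcases Nat.eq_zero_or_pos n with rfl | hn
    · rw [h.1, h'.1]
    have e := h.2 n hn
    have e' := h'.2 n hn
    rw [sum_range_succ, Nat.choose_self] at e e'
    rw [sum_congr rfl fun l hl => by rw [ih l (mem_range.1 hl)]] at e
    have hmul : (1 - Q ^ (n + 1)) * (β n - β' n) = 0 := by linear_combination e' - e
    exact sub_eq_zero.1 ((mul_eq_zero.1 hmul).resolve_left
      (one_sub_pow_ne_zero_of_not_isOfFinOrder hQ n.succ_ne_zero))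

theorem carlitzRec_carlitzBernoulli {Q : ℝ} (hQ : ¬IsOfFinOrder Q) :
    CarlitzRec Q (carlitzBernoulli Q) := by
  have hQ1 : 1 - Q ≠ 0 := by simpa using one_sub_pow_ne_zero_of_not_isOfFinOrder hQ one_ne_zero
  refine ⟨by simp [carlitzBernoulli, carlitzCoeff, hQ1], fun n hn => ?_⟩
  have hcoeff (m : ℕ) : carlitzCoeff Q m * (1 - Q ^ (m + 1)) = (m + 1) * (1 - Q) :=
    div_mul_cancel₀ _ (one_sub_pow_ne_zero_of_not_isOfFinOrder hQ m.succ_ne_zero)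
  have hsum := sum_choose_mul_pow_mul_carlitzBernoulli Q 1 Q n
  simp only [one_pow, mul_one] at hsum
  rw [hsum, show 1 + Q / (1 - Q) = (1 - Q)⁻¹ by field_simp; ring, carlitzBernoulli, mul_sum,
    mul_sum, ← sum_sub_distrib]
  have hterm : ∀ m ∈ range (n + 1),
      Q * ((n.choose m : ℝ) * (1 - Q)⁻¹ ^ (n - m) *
            ((-(Q / (1 - Q))) ^ m * carlitzCoeff Q m)) -
          (1 - Q)⁻¹ ^ n * ((n.choose m : ℝ) * (-1) ^ m * carlitzCoeff Q m) =
        -((1 - Q)⁻¹ ^ n * (1 - Q)) * ((-1) ^ m * n.choose m + (-1) ^ m * n.choose m * m) := by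
    intro m hm
    rw [← pow_sub_mul_pow (1 - Q)⁻¹ (Nat.lt_succ_iff.1 (mem_range.1 hm))]
    linear_combination
      (-(1 - Q)⁻¹ ^ (n - m) * (1 - Q)⁻¹ ^ m * n.choose m * (-1) ^ m) * hcoeff m
  have halt : ∑ m ∈ range (n + 1), (-1 : ℝ) ^ m * n.choose m = 0 := by
    exact_mod_cast Int.alternating_sum_range_choose_of_ne (n := n) (by omega)
  rw [sum_congr rfl hterm, ← mul_sum, sum_add_distrib, sum_neg_one_pow_mul_choose_mul, halt]
  split_ifs with h1
  · subst h1; simp [hQ1]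
  · simp

theorem carlitzPoly_carlitzBernoulli {Q : ℝ} (hQ : 0 < Q) (n : ℕ) (x : ℝ) :
    carlitzPoly Q (carlitzBernoulli Q) n x = (1 - Q)⁻¹ ^ n *
      ∑ m ∈ range (n + 1), (n.choose m : ℝ) * (-1) ^ m * carlitzCoeff Q m * (Q ^ x) ^ m := by
  have hpow (l : ℕ) : Q ^ ((l : ℝ) * x) = (Q ^ x) ^ l := by
    rw [mul_comm, Real.rpow_mul hQ.le, Real.rpow_natCast]
  have hsum : qnum Q x + Q ^ x / (1 - Q) = (1 - Q)⁻¹ := by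
    rw [qnum, ← add_div, sub_add_cancel, one_div]
  simp_rw [carlitzPoly, hpow]
  rw [sum_choose_mul_pow_mul_carlitzBernoulli, hsum, mul_sum]
  refine sum_congr rfl fun m hm => ?_
  rw [← pow_sub_mul_pow (1 - Q)⁻¹ (Nat.lt_succ_iff.1 (mem_range.1 hm))]
  ring

theorem sum_pow_mul_carlitzPoly_carlitzBernoulli_pow {q : ℝ} (hq : 0 < q) {w : ℕ} (hw : w ≠ 0)
    (n : ℕ) (x : ℝ) :
    ∑ j ∈ range w, q ^ j * carlitzPoly (q ^ w) (carlitzBernoulli (q ^ w)) n (x + j / w) =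
      (1 - q ^ w)⁻¹ ^ n * ∑ m ∈ range (n + 1), (n.choose m : ℝ) * (-1) ^ m *
        (q ^ ((w : ℝ) * x)) ^ m *
          (carlitzCoeff (q ^ w) m * ∑ j ∈ range w, (q ^ (m + 1)) ^ j) := by
  have hshift (j : ℕ) : (q ^ w : ℝ) ^ (x + j / w) = q ^ ((w : ℝ) * x) * q ^ j := by
    rw [← Real.rpow_natCast q w, ← Real.rpow_mul hq.le, mul_add,
      mul_div_cancel₀ _ (Nat.cast_ne_zero.2 hw), Real.rpow_add hq, Real.rpow_natCast]
  simp_rw [carlitzPoly_carlitzBernoulli (pow_pos hq w), hshift, mul_sum]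
  rw [sum_comm]
  exact sum_congr rfl fun m _ => sum_congr rfl fun j _ => by ring

theorem carlitzCoeff_pow_mul_geom_sum {q : ℝ} (hq : ¬IsOfFinOrder q) (w m : ℕ) :
    carlitzCoeff (q ^ w) m * ∑ j ∈ range w, (q ^ (m + 1)) ^ j =
      carlitzCoeff q m * ((1 - q ^ w) / (1 - q)) := by
  rcases eq_or_ne w 0 with rfl | hw
  · simp
  have hgeom := mul_neg_geom_sum (q ^ (m + 1)) w
  rw [← pow_mul, mul_comm (m + 1), pow_mul] at hgeom
  have hqm := one_sub_pow_ne_zero_of_not_isOfFinOrder hq m.succ_ne_zero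
  have hq1 : 1 - q ≠ 0 := by simpa using one_sub_pow_ne_zero_of_not_isOfFinOrder hq one_ne_zero
  have hqwm : 1 - (q ^ w) ^ (m + 1) ≠ 0 := by
    rw [← pow_mul]
    exact one_sub_pow_ne_zero_of_not_isOfFinOrder hq (Nat.mul_ne_zero hw m.succ_ne_zero)
  have hgs : ∑ j ∈ range w, (q ^ (m + 1)) ^ j ≠ 0 :=
    right_ne_zero_of_mul (hgeom.symm ▸ hqwm)
  rw [carlitzCoeff, carlitzCoeff, ← hgeom]
  field_simp

theorem carlitz_multiplication (q : ℝ) (hq : 0 < q) (hq1 : q ≠ 1) (w : ℕ) (hw : 0 < w)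
    (βq βqw : ℕ → ℝ) (h1 : CarlitzRec q βq) (h2 : CarlitzRec (q ^ w) βqw) :
    ∀ (n : ℕ) (x : ℝ),
      carlitzPoly q βq n ((w : ℝ) * x) =
        qnum q w ^ ((n : ℤ) - 1) *
          ∑ j ∈ Finset.range w, q ^ j * carlitzPoly (q ^ w) βqw n (x + (j : ℝ) / w) := by
  intro n x
  have hq' : ¬IsOfFinOrder q := fun h => hq1 (h.eq_one hq.le)
  have hqw : ¬IsOfFinOrder (q ^ w) := fun h => hq' (h.of_pow hw.ne')
  obtain rfl := h1.unique hq' (carlitzRec_carlitzBernoulli hq')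
  obtain rfl := h2.unique hqw (carlitzRec_carlitzBernoulli hqw)
  have hscale : qnum q w ^ ((n : ℤ) - 1) * (1 - q ^ w)⁻¹ ^ n * ((1 - q ^ w) / (1 - q)) =
      (1 - q)⁻¹ ^ n := by
    have hqw1 := one_sub_pow_ne_zero_of_not_isOfFinOrder hq' hw.ne'
    have hq1' : 1 - q ≠ 0 := sub_ne_zero.2 hq1.symm
    rw [qnum, Real.rpow_natCast, zpow_sub_one₀ (div_ne_zero hqw1 hq1'), zpow_natCast]
    field_simp
    rw [← mul_pow]
    field_simp
  rw [carlitzPoly_carlitzBernoulli hq, sum_pow_mul_carlitzPoly_carlitzBernoulli_pow hq hw.ne',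
    ← hscale]
  simp only [carlitzCoeff_pow_mul_geom_sum hq', mul_sum]
  exact sum_congr rfl fun m _ => by ring
end

section
/- For every n ≥ 0, every positive integer w, and every rational (or real) x, the classical Bernoulli polynomial satisfies the multiplication formula B_n(wx) = w^{n−1} · Σ_{j=0}^{w−1} B_n(x + j/w). -/
/-!
Read the right-hand side as a polynomial `Aₙ(y) = w ^ (n - 1) * ∑ j < w, Bₙ((y + j) / w)` in
`y = w x`. It satisfies both recurrences of the Bernoulli polynomials: shifting `y` by one
telescopes the sum to `w ^ (n - 1) * (Bₙ(1 + y / w) - Bₙ(y / w)) = n yⁿ⁻¹`, and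
`Aₙ₊₁' = (n + 1) Aₙ`. These recurrences determine the sequence: the difference `Dₙ` of two
solutions is periodic, hence constant, so `(n + 1) Dₙ = Dₙ₊₁' = 0`.
-/

open Finset

namespace Polynomial

theorem eq_C_of_eval_add_eq {R : Type*} [CommRing R] [IsDomain R] [CharZero R] {p : R[X]}
    {c : R} (hc : c ≠ 0) (hp : ∀ x, p.eval (x + c) = p.eval x) : p = C (p.eval 0) := by
  have hroot : ∀ k : ℕ, (p - C (p.eval 0)).IsRoot (k * c) := by
    intro k
    induction k with
    | zero => simp
    | succ k ih => simpa [add_mul, hp] using ih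
  have hinj : Function.Injective fun k : ℕ => (k : R) * c :=
    fun a b hab => Nat.cast_injective (mul_right_cancel₀ hc hab)
  exact sub_eq_zero.mp <| eq_zero_of_infinite_isRoot _ <|
    (Set.infinite_range_of_injective hinj).mono (Set.range_subset_iff.mpr hroot)

theorem eq_bernoulli_of_eval_one_add_of_derivative {P : ℕ → ℚ[X]}
    (h_eval : ∀ n x, (P n).eval (1 + x) = (P n).eval x + n * x ^ (n - 1))
    (h_deriv : ∀ n, derivative (P (n + 1)) = (n + 1) * P n) (n : ℕ) :
    P n = bernoulli n := by
  set D : ℕ → ℚ[X] := fun n => P n - bernoulli n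
  have hD_const (n : ℕ) : D n = C ((D n).eval 0) := by
    refine eq_C_of_eval_add_eq one_ne_zero fun x => ?_
    simp only [D, eval_sub, add_comm x, h_eval, bernoulli_eval_one_add]
    ring
  have hD_deriv : derivative (D (n + 1)) = (n + 1) * D n := by
    simp only [D, derivative_sub, h_deriv, derivative_bernoulli_add_one, mul_sub]
  rw [hD_const (n + 1), derivative_C, eq_comm, mul_eq_zero] at hD_deriv
  refine sub_eq_zero.mp (hD_deriv.resolve_left ?_)
  exact_mod_cast Nat.succ_ne_zero n

noncomputable def bernoulliMulSum (w n : ℕ) : ℚ[X] :=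
  C ((w : ℚ) ^ ((n : ℤ) - 1)) *
    ∑ j ∈ range w, (bernoulli n).comp (C (w : ℚ)⁻¹ * (X + C (j : ℚ)))

theorem eval_bernoulliMulSum (w n : ℕ) (x : ℚ) :
    (bernoulliMulSum w n).eval x =
      (w : ℚ) ^ ((n : ℤ) - 1) * ∑ j ∈ range w, (bernoulli n).eval ((x + j) / w) := by
  simp [bernoulliMulSum, eval_finsetSum, div_eq_inv_mul]

theorem bernoulliMulSum_eval_one_add {w : ℕ} (hw : 0 < w) (n : ℕ) (x : ℚ) :
    (bernoulliMulSum w n).eval (1 + x) = (bernoulliMulSum w n).eval x + n * x ^ (n - 1) := by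
  have hw0 : (w : ℚ) ≠ 0 := by positivity
  have h_shift : ∑ j ∈ range w, (bernoulli n).eval ((1 + x + j) / w) =
      ∑ j ∈ range w, (bernoulli n).eval ((x + j) / w) + n * (x / w) ^ (n - 1) := by
    have h_last : (x + w) / w = 1 + x / w := by field_simp; ring
    rw [← sub_eq_iff_eq_add', ← sum_sub_distrib]
    convert sum_range_sub (fun j : ℕ => (bernoulli n).eval ((x + j) / w)) w using 1
    · refine sum_congr rfl fun j _ => ?_
      push_cast; ring_nf
    · simp [h_last, bernoulli_eval_one_add]
  have h_scale : (w : ℚ) ^ ((n : ℤ) - 1) * (n * (x / w) ^ (n - 1)) = n * x ^ (n - 1) := by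
    rcases n with _ | m
    · simp
    · simp only [Nat.cast_succ, add_sub_cancel_right, zpow_natCast, add_tsub_cancel_right, div_pow]
      field_simp
  rw [eval_bernoulliMulSum, eval_bernoulliMulSum, h_shift, mul_add, h_scale]

theorem derivative_bernoulliMulSum_add_one (w n : ℕ) :
    derivative (bernoulliMulSum w (n + 1)) = (n + 1) * bernoulliMulSum w n := by
  rcases Nat.eq_zero_or_pos w with rfl | hw
  · simp [bernoulliMulSum]
  have hw0 : (w : ℚ) ≠ 0 := by positivity
  have h_pow :
      (w : ℚ) ^ (((n + 1 : ℕ) : ℤ) - 1) * (w : ℚ)⁻¹ = (w : ℚ) ^ ((n : ℤ) - 1) := by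
    rw [Nat.cast_succ, add_sub_cancel_right, ← zpow_neg_one, ← zpow_add₀ hw0, sub_eq_add_neg]
  simp only [bernoulliMulSum, derivative_sum, derivative_comp, derivative_bernoulli_add_one,
    mul_comp, derivative_mul, derivative_C, derivative_add, derivative_X, zero_mul, zero_add,
    mul_one, add_zero, add_comp, natCast_comp, one_comp, ← mul_sum]
  rw [← h_pow, C_mul]
  ring

theorem bernoulliMulSum_eq_bernoulli {w : ℕ} (hw : 0 < w) (n : ℕ) :
    bernoulliMulSum w n = bernoulli n :=
  eq_bernoulli_of_eval_one_add_of_derivative (bernoulliMulSum_eval_one_add hw)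
    (derivative_bernoulliMulSum_add_one w) n

end Polynomial

theorem bernoulli_multiplication (n : ℕ) (w : ℕ) (hw : 0 < w) (x : ℚ) :
    (Polynomial.bernoulli n).eval ((w : ℚ) * x) =
      (w : ℚ) ^ ((n : ℤ) - 1) *
        ∑ j ∈ Finset.range w, (Polynomial.bernoulli n).eval (x + (j : ℚ) / w) := by
  have hw0 : (w : ℚ) ≠ 0 := by positivity
  conv_lhs => rw [← Polynomial.bernoulliMulSum_eq_bernoulli hw, Polynomial.eval_bernoulliMulSum]
  simp only [add_div, mul_div_cancel_left₀ x hw0]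
end

section
/- For every n ≥ 0, all positive integers w₁, w₂, and every rational (or real) x, the classical Bernoulli polynomial satisfies the symmetric identity w₁^{n−1} · Σ_{j=0}^{w₁−1} B_n(w₂x + (w₂/w₁)j) = w₂^{n−1} · Σ_{j=0}^{w₂−1} B_n(w₁x + (w₁/w₂)j). -/
/-!
By Raabe's multiplication theorem `B_n(m x) = m^(n-1) ∑_{k<m} B_n(x + k/m)`, both sides equal
`(w₁ w₂)^(n-1) ∑_{j<w₁} ∑_{i<w₂} B_n(x + j/w₁ + i/w₂)`.

For Raabe's theorem, `B_n(x + 1) - B_n(x) = n x^(n-1)` makes the difference of its two sides a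
polynomial of period `1/m`, hence a constant. The derivative of the difference for `n + 1` is
`(n + 1) m` times the difference for `n`, so every difference vanishes.
-/

open Polynomial Finset

namespace Polynomial

theorem eq_C_of_periodic {R : Type*} [CommRing R] [IsDomain R] [CharZero R]
    {p : R[X]} {c : R} (hc : c ≠ 0) (hp : Function.Periodic p.eval c) :
    p = C (p.eval 0) := by
  refine eq_of_infinite_eval_eq _ _
    ((Set.infinite_range_of_injective (f := fun k : ℕ => (k : R) * c) ?_).mono ?_)
  · exact fun k l hkl => Nat.cast_injective (mul_right_cancel₀ hc hkl)
  · rintro _ ⟨k, rfl⟩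
    simp [hp.nat_mul_eq k]

/-- Raabe's formula, multiplied by `m` to keep the exponent natural at `n = 0`. -/
noncomputable def raabeDefect (m n : ℕ) : ℚ[X] :=
  C (m : ℚ) * (bernoulli n).comp (C (m : ℚ) * X) -
    C ((m : ℚ) ^ n) * ∑ k ∈ range m, (bernoulli n).comp (X + C ((k : ℚ) / m))

theorem sum_range_eval_bernoulli_add_inv {m : ℕ} (hm : m ≠ 0) (n : ℕ) (x : ℚ) :
    ∑ k ∈ range m, (bernoulli n).eval (x + 1 / m + k / m) =
      ∑ k ∈ range m, (bernoulli n).eval (x + k / m) + n * x ^ (n - 1) := by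
  have hm' : (m : ℚ) ≠ 0 := Nat.cast_ne_zero.2 hm
  have htel := sum_range_succ' (fun k : ℕ => (bernoulli n).eval (x + k / m)) m
  rw [sum_range_succ, Nat.cast_zero, zero_div, add_zero, div_self hm', add_comm x 1,
    bernoulli_eval_one_add] at htel
  push_cast at htel
  simp only [add_div, ← add_assoc] at htel
  simp only [add_right_comm x (1 / (m : ℚ))]
  linarith

theorem raabeDefect_periodic {m : ℕ} (hm : m ≠ 0) (n : ℕ) :
    Function.Periodic (raabeDefect m n).eval (1 / m) := by
  intro x
  have hm' : (m : ℚ) ≠ 0 := Nat.cast_ne_zero.2 hm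
  have hshift : (m : ℚ) * (x + 1 / m) = 1 + m * x := by field_simp; ring
  simp only [raabeDefect, eval_sub, eval_mul, eval_C, eval_comp, eval_add, eval_X, eval_finsetSum,
    hshift, bernoulli_eval_one_add]
  rw [sum_range_eval_bernoulli_add_inv hm]
  rcases n with _ | n
  · simp
  · simp only [Nat.add_sub_cancel, mul_pow, pow_succ]
    push_cast
    ring

theorem derivative_raabeDefect_succ (m n : ℕ) :
    derivative (raabeDefect m (n + 1)) = C (((n : ℚ) + 1) * m) * raabeDefect m n := by
  simp only [raabeDefect, derivative_sub, derivative_mul, derivative_C, zero_mul, zero_add,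
    derivative_comp, derivative_bernoulli_add_one, derivative_sum, derivative_add, derivative_X,
    add_zero, one_mul]
  simp only [mul_comp, natCast_comp, add_comp, one_comp, ← mul_sum, map_mul, map_add, map_natCast,
    map_one, map_pow]
  ring

theorem raabeDefect_eq_zero {m : ℕ} (hm : m ≠ 0) (n : ℕ) : raabeDefect m n = 0 := by
  have hconst := eq_C_of_periodic (by positivity) (raabeDefect_periodic hm (n + 1))
  have hderiv := derivative_raabeDefect_succ m n
  rw [hconst, derivative_C, eq_comm, mul_eq_zero, C_eq_zero] at hderiv
  exact hderiv.resolve_left (by positivity)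

theorem bernoulli_eval_mul {m : ℕ} (hm : m ≠ 0) (n : ℕ) (x : ℚ) :
    (bernoulli n).eval (m * x) =
      (m : ℚ) ^ ((n : ℤ) - 1) * ∑ k ∈ range m, (bernoulli n).eval (x + k / m) := by
  have hm' : (m : ℚ) ≠ 0 := Nat.cast_ne_zero.2 hm
  have h := congrArg (eval x) (raabeDefect_eq_zero hm n)
  simp only [raabeDefect, eval_sub, eval_mul, eval_C, eval_comp, eval_X, eval_add, eval_finsetSum,
    eval_zero, sub_eq_zero] at h
  rw [zpow_sub_one₀ hm', zpow_natCast, mul_right_comm, ← h]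
  field_simp

theorem zpow_mul_sum_bernoulli_eval_eq_double_sum (n w₁ : ℕ) {w₂ : ℕ} (hw₂ : w₂ ≠ 0) (x : ℚ) :
    (w₁ : ℚ) ^ ((n : ℤ) - 1) * ∑ j ∈ range w₁, (bernoulli n).eval (w₂ * x + (w₂ / w₁) * j) =
      ((w₁ : ℚ) * w₂) ^ ((n : ℤ) - 1) *
        ∑ j ∈ range w₁, ∑ i ∈ range w₂, (bernoulli n).eval (x + j / w₁ + i / w₂) := by
  have hfactor (j : ℕ) : (w₂ : ℚ) * x + (w₂ / w₁) * j = w₂ * (x + j / w₁) := by ring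
  simp only [hfactor, bernoulli_eval_mul hw₂, mul_sum, mul_zpow, mul_assoc]

end Polynomial

theorem bernoulli_symmetric (n : ℕ) (w₁ w₂ : ℕ) (hw₁ : 0 < w₁) (hw₂ : 0 < w₂) (x : ℚ) :
    (w₁ : ℚ) ^ ((n : ℤ) - 1) *
        ∑ j ∈ Finset.range w₁,
          (Polynomial.bernoulli n).eval ((w₂ : ℚ) * x + ((w₂ : ℚ) / w₁) * j) =
      (w₂ : ℚ) ^ ((n : ℤ) - 1) *
        ∑ j ∈ Finset.range w₂,
          (Polynomial.bernoulli n).eval ((w₁ : ℚ) * x + ((w₁ : ℚ) / w₂) * j) := by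
  rw [zpow_mul_sum_bernoulli_eval_eq_double_sum n w₁ hw₂.ne',
    zpow_mul_sum_bernoulli_eval_eq_double_sum n w₂ hw₁.ne', mul_comm (w₂ : ℚ), Finset.sum_comm]
  simp only [add_right_comm x]
end

section
/- Let r be a positive integer, let w₁, w₂ be positive integers, and for each rational y let (B_n^{(r)}(y))_{n≥0} be the higher-order Bernoulli polynomial values, i.e. the rationals determined by (Σ_{n≥0} B_n^{(r)}(y) tⁿ/n!)·(exp(t) − 1)^r = t^r·exp(yt) in ℚ[[t]]. Then for every n ≥ 0 and every rational x, w₁^{n−r} · Σ_{j₁,…,j_r=0}^{w₁−1} B_n^{(r)}(w₂x + (w₂/w₁)(j₁+⋯+j_r)) = w₂^{n−r} · Σ_{j₁,…,j_r=0}^{w₂−1} B_n^{(r)}(w₁x + (w₁/w₂)(j₁+⋯+j_r)). -/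
/-!
Summing the defining identity over `j` and substituting `t ↦ w₁ t`, the generating function of
`w₁ⁿ ∑ⱼ B_n^{(r)}(w₂x + (w₂/w₁)∑ j)`, multiplied by `(e^{w₁t} - 1)^r`, equals
`w₁^r t^r e^{w₁w₂xt} (1 + e^{w₂t} + ⋯ + e^{(w₁-1)w₂t})^r`. A further factor `(e^{w₂t} - 1)^r`
telescopes the geometric sum to `(e^{w₁w₂t} - 1)^r`, so the product is symmetric in `w₁, w₂`
up to the factor `w₁^r`. Cancelling the nonzero series `(e^{w₁t} - 1)^r (e^{w₂t} - 1)^r` and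
comparing coefficients gives the identity.
-/

open PowerSeries Finset

section ExpSeries

variable {A : Type*} [CommRing A] [Algebra ℚ A]

theorem rescale_exp_pow (a : A) (k : ℕ) :
    rescale a (exp A) ^ k = rescale (k * a) (exp A) := by
  rw [← map_pow, exp_pow_eq_rescale_exp, rescale_rescale]

theorem prod_rescale_exp {ι : Type*} (s : Finset ι) (f : ι → A) :
    ∏ i ∈ s, rescale (f i) (exp A) = rescale (∑ i ∈ s, f i) (exp A) := by
  classical
  induction s using Finset.induction with
  | empty => simp
  | insert i s hi ih => rw [prod_insert hi, sum_insert hi, ih, exp_mul_exp_eq_exp_add]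

theorem geom_sum_rescale_exp_mul (a : A) (u : ℕ) :
    (∑ i ∈ range u, rescale (i * a) (exp A)) * (rescale a (exp A) - 1) =
      rescale (u * a) (exp A) - 1 := by
  simp only [← rescale_exp_pow, geom_sum_mul]

theorem sum_pi_rescale_exp_mul_pow (r u : ℕ) (c d : A) :
    (∑ j : Fin r → Fin u, rescale (c + d * ∑ l, ((j l : ℕ) : A)) (exp A)) *
        (rescale d (exp A) - 1) ^ r =
      rescale c (exp A) * (rescale (u * d) (exp A) - 1) ^ r := by
  have hj (j : Fin r → Fin u) : rescale (c + d * ∑ l, ((j l : ℕ) : A)) (exp A) =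
      rescale c (exp A) * ∏ l, rescale ((j l : ℕ) * d) (exp A) := by
    rw [prod_rescale_exp, exp_mul_exp_eq_exp_add, mul_sum]
    simp only [mul_comm d]
  simp only [hj]
  rw [← mul_sum, ← Fintype.sum_pow (fun i : Fin u => rescale ((i : ℕ) * d) (exp A)),
    Fin.sum_univ_eq_sum_range (fun i => rescale (i * d) (exp A)), mul_assoc, ← mul_pow,
    geom_sum_rescale_exp_mul]

theorem rescale_exp_sub_one_ne_zero {a : A} (ha : a ≠ 0) : rescale a (exp A) - 1 ≠ 0 := by
  intro h
  apply ha
  simpa using congrArg (coeff 1) h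

end ExpSeries

section HigherBernoulli

variable {K : Type*} [Field K] [CharZero K]

theorem rescale_exp_eq_mk (y : K) :
    rescale y (exp K) = PowerSeries.mk fun n => y ^ n / n.factorial := by
  ext n
  simp [div_eq_mul_inv]

def IsHigherBernoulli (r : ℕ) (B : K → ℕ → K) : Prop :=
  ∀ y : K, (PowerSeries.mk fun n => B y n / n.factorial) * (exp K - 1) ^ r =
    X ^ r * PowerSeries.mk fun n => y ^ n / n.factorial

namespace IsHigherBernoulli

variable {r : ℕ} {B : K → ℕ → K}

theorem rescale_sum_mul_exp_sub_one_pow (hB : IsHigherBernoulli r B)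
    {u : ℕ} (hu : u ≠ 0) (v x : K) :
    rescale (u : K) (∑ j : Fin r → Fin u,
        PowerSeries.mk fun n => B (v * x + v / u * ∑ l, ((j l : ℕ) : K)) n / n.factorial) *
        (rescale (u : K) (exp K) - 1) ^ r * (rescale v (exp K) - 1) ^ r =
      C ((u : K) ^ r) *
        (X ^ r * rescale (u * v * x) (exp K) * (rescale (u * v) (exp K) - 1) ^ r) := by
  have hsum : (∑ j : Fin r → Fin u, PowerSeries.mk fun n =>
        B (v * x + v / u * ∑ l, ((j l : ℕ) : K)) n / n.factorial) * (exp K - 1) ^ r =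
      X ^ r * ∑ j : Fin r → Fin u, rescale (v * x + v / u * ∑ l, ((j l : ℕ) : K)) (exp K) := by
    rw [sum_mul, mul_sum]
    exact sum_congr rfl fun j _ => by rw [hB, rescale_exp_eq_mk]
  have hshift (j : Fin r → Fin u) : (v * x + v / u * ∑ l, ((j l : ℕ) : K)) * u =
      u * v * x + v * ∑ l, ((j l : ℕ) : K) := by
    field_simp
  have hrescaled := congrArg (rescale (u : K)) hsum
  simp only [map_mul, map_pow, map_sub, map_one, map_sum, rescale_X, rescale_rescale,
    hshift] at hrescaled
  rw [map_sum, hrescaled, mul_assoc, sum_pi_rescale_exp_mul_pow, mul_pow, ← map_pow]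
  ring

theorem C_pow_mul_rescale_sum_comm (hB : IsHigherBernoulli r B)
    {u v : ℕ} (hu : u ≠ 0) (hv : v ≠ 0) (x : K) :
    C ((v : K) ^ r) * rescale (u : K) (∑ j : Fin r → Fin u,
        PowerSeries.mk fun n => B (v * x + v / u * ∑ l, ((j l : ℕ) : K)) n / n.factorial) =
      C ((u : K) ^ r) * rescale (v : K) (∑ j : Fin r → Fin v,
        PowerSeries.mk fun n => B (u * x + u / v * ∑ l, ((j l : ℕ) : K)) n / n.factorial) := by
  have h₁ := hB.rescale_sum_mul_exp_sub_one_pow hu (v : K) x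
  have h₂ := hB.rescale_sum_mul_exp_sub_one_pow hv (u : K) x
  rw [mul_comm (v : K) u] at h₂
  refine mul_right_cancel₀ (b := (rescale (u : K) (exp K) - 1) ^ r *
    (rescale (v : K) (exp K) - 1) ^ r) ?_ ?_
  · exact mul_ne_zero (pow_ne_zero _ (rescale_exp_sub_one_ne_zero (Nat.cast_ne_zero.2 hu)))
      (pow_ne_zero _ (rescale_exp_sub_one_ne_zero (Nat.cast_ne_zero.2 hv)))
  · linear_combination C ((v : K) ^ r) * h₁ - C ((u : K) ^ r) * h₂

end IsHigherBernoulli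

end HigherBernoulli

theorem higher_bernoulli_symmetric_general (r : ℕ)
    (w₁ w₂ : ℕ) (hw₁ : 0 < w₁) (hw₂ : 0 < w₂) (B : ℚ → ℕ → ℚ)
    (hB : ∀ y : ℚ,
      (PowerSeries.mk fun n => B y n / n.factorial) * (PowerSeries.exp ℚ - 1) ^ r =
        PowerSeries.X ^ r * PowerSeries.mk fun n => y ^ n / n.factorial) :
    ∀ (n : ℕ) (x : ℚ),
      (w₁ : ℚ) ^ ((n : ℤ) - r) *
          ∑ j : Fin r → Fin w₁,
            B ((w₂ : ℚ) * x + ((w₂ : ℚ) / w₁) * ∑ l, ((j l : ℕ) : ℚ)) n =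
        (w₂ : ℚ) ^ ((n : ℤ) - r) *
          ∑ j : Fin r → Fin w₂,
            B ((w₁ : ℚ) * x + ((w₁ : ℚ) / w₂) * ∑ l, ((j l : ℕ) : ℚ)) n := by
  intro n x
  have hc := congrArg (coeff n)
    (IsHigherBernoulli.C_pow_mul_rescale_sum_comm hB hw₁.ne' hw₂.ne' x)
  simp only [coeff_C_mul, coeff_rescale, map_sum, coeff_mk, ← mul_div_assoc, ← sum_div,
    ← mul_sum] at hc
  rw [div_left_inj' (by positivity)] at hc
  rw [zpow_sub₀ (by positivity), zpow_sub₀ (by positivity), zpow_natCast, zpow_natCast,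
    zpow_natCast, zpow_natCast, div_mul_eq_mul_div, div_mul_eq_mul_div,
    div_eq_div_iff (by positivity) (by positivity)]
  linear_combination hc

theorem higher_bernoulli_symmetric (r : ℕ) (hr : 0 < r)
    (w₁ w₂ : ℕ) (hw₁ : 0 < w₁) (hw₂ : 0 < w₂) (B : ℚ → ℕ → ℚ)
    (hB : ∀ y : ℚ,
      (PowerSeries.mk fun n => B y n / n.factorial) * (PowerSeries.exp ℚ - 1) ^ r =
        PowerSeries.X ^ r * PowerSeries.mk fun n => y ^ n / n.factorial) :
    ∀ (n : ℕ) (x : ℚ),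
      (w₁ : ℚ) ^ ((n : ℤ) - r) *
          ∑ j : Fin r → Fin w₁,
            B ((w₂ : ℚ) * x + ((w₂ : ℚ) / w₁) * ∑ l, ((j l : ℕ) : ℚ)) n =
        (w₂ : ℚ) ^ ((n : ℤ) - r) *
          ∑ j : Fin r → Fin w₂,
            B ((w₁ : ℚ) * x + ((w₁ : ℚ) / w₂) * ∑ l, ((j l : ℕ) : ℚ)) n :=
  higher_bernoulli_symmetric_general r w₁ w₂ hw₁ hw₂ B hB
end

section
/- Let r be a positive integer, let w be a positive integer, and for each rational y let (B_n^{(r)}(y))_{n≥0} be the higher-order Bernoulli polynomial values, i.e. the rationals determined by (Σ_{n≥0} B_n^{(r)}(y) tⁿ/n!)·(exp(t) − 1)^r = t^r·exp(yt) in ℚ[[t]]. Then for every n ≥ 0 and every rational x, B_n^{(r)}(wx) = w^{n−r} · Σ_{j₁,…,j_r=0}^{w−1} B_n^{(r)}(x + (j₁+⋯+j_r)/w). -/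
/-!
Write `F_y(t) = ∑ Bₙ⁽ʳ⁾(y) tⁿ/n!`. Substituting `t ↦ wt` in the defining identity at
`y = x + s/w` gives `F_y(wt) (e^{wt} - 1)^r = w^r t^r e^{wxt} e^{st}`. Summing over
`j₁, …, j_r < w` with `s = j₁ + ⋯ + j_r` produces the factor `(1 + e^t + ⋯ + e^{(w-1)t})^r`,
which turns `t^r e^{wxt} = F_{wx}(t) (e^t - 1)^r` into `F_{wx}(t) (e^{wt} - 1)^r`.
Cancelling the nonzero series `(e^{wt} - 1)^r` leaves `∑_j F_{x+s/w}(wt) = w^r F_{wx}(t)`,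
and the claim is the comparison of the coefficients of `tⁿ`.
-/

open Finset

namespace PowerSeries

variable {K : Type*} [Field K] [CharZero K]

theorem mk_pow_div_factorial_eq_rescale_exp (y : K) :
    (mk fun n => y ^ n / n.factorial) = rescale y (exp K) := by
  ext n
  simp [coeff_rescale, coeff_exp, div_eq_mul_inv]

theorem exp_pow_sub_one_ne_zero {w : ℕ} (hw : w ≠ 0) : exp K ^ w - 1 ≠ 0 := by
  intro h
  have := congrArg (coeff 1) h
  simp [exp_pow_eq_rescale_exp, coeff_rescale, coeff_exp] at this
  exact hw this

theorem sum_exp_pow_sum_mul_exp_sub_one_pow (r w : ℕ) :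
    (∑ j : Fin r → Fin w, exp K ^ ∑ l, (j l : ℕ)) * (exp K - 1) ^ r = (exp K ^ w - 1) ^ r := by
  have hexpand :
      ∑ j : Fin r → Fin w, exp K ^ ∑ l, (j l : ℕ) = (∑ k : Fin w, exp K ^ (k : ℕ)) ^ r := by
    simp only [Fintype.sum_pow, prod_pow_eq_pow_sum]
  rw [hexpand, ← mul_pow, Fin.sum_univ_eq_sum_range (exp K ^ ·), geom_sum_mul]

section HigherBernoulli

variable {r : ℕ} {B : K → ℕ → K}
  (hB : ∀ y, (mk fun n => B y n / n.factorial) * (exp K - 1) ^ r =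
    X ^ r * mk fun n => y ^ n / n.factorial)
include hB

theorem rescale_egf_mul_exp_pow_sub_one_pow (w : ℕ) (y : K) :
    rescale (w : K) (mk fun n => B y n / n.factorial) * (exp K ^ w - 1) ^ r =
      C (w : K) ^ r * X ^ r * rescale (w * y) (exp K) := by
  have h := congrArg (rescale (w : K)) (hB y)
  rw [map_mul, map_mul, map_pow, map_pow, map_sub, map_one, rescale_X,
    mk_pow_div_factorial_eq_rescale_exp, rescale_rescale, ← exp_pow_eq_rescale_exp, mul_pow] at h
  rw [h, mul_comm y]

theorem rescale_sum_egf_shift {w : ℕ} (hw : w ≠ 0) (x : K) :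
    rescale (w : K) (∑ j : Fin r → Fin w,
        mk fun n => B (x + (∑ l, ((j l : ℕ) : K)) / w) n / n.factorial) =
      C ((w : K) ^ r) * mk fun n => B (w * x) n / n.factorial := by
  have hw' : (w : K) ≠ 0 := Nat.cast_ne_zero.2 hw
  have hshift (j : Fin r → Fin w) :
      (w : K) * (x + (∑ l, ((j l : ℕ) : K)) / w) = w * x + ((∑ l, (j l : ℕ) : ℕ) : K) := by
    push_cast; field_simp
  have hB' := hB (w * x)
  rw [mk_pow_div_factorial_eq_rescale_exp] at hB'
  apply mul_right_cancel₀ (pow_ne_zero r (exp_pow_sub_one_ne_zero (K := K) hw))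
  calc _ = ∑ j : Fin r → Fin w, C (w : K) ^ r * X ^ r * rescale (w * x) (exp K) *
          exp K ^ ∑ l, (j l : ℕ) := by
        rw [map_sum, sum_mul]
        refine sum_congr rfl fun j _ => ?_
        rw [rescale_egf_mul_exp_pow_sub_one_pow hB, hshift, ← exp_mul_exp_eq_exp_add,
          ← exp_pow_eq_rescale_exp, ← mul_assoc]
    _ = C ((w : K) ^ r) * ((mk fun n => B (w * x) n / n.factorial) * (exp K - 1) ^ r) *
          ∑ j : Fin r → Fin w, exp K ^ ∑ l, (j l : ℕ) := by
        rw [← mul_sum, hB', map_pow, mul_assoc (C _ ^ r)]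
    _ = _ := by
        rw [← sum_exp_pow_sum_mul_exp_sub_one_pow]; ring

end HigherBernoulli

end PowerSeries

open PowerSeries in
theorem higher_bernoulli_multiplication_general (r : ℕ)
    (w : ℕ) (hw : 0 < w) (B : ℚ → ℕ → ℚ)
    (hB : ∀ y : ℚ,
      (PowerSeries.mk fun n => B y n / n.factorial) * (PowerSeries.exp ℚ - 1) ^ r =
        PowerSeries.X ^ r * PowerSeries.mk fun n => y ^ n / n.factorial) :
    ∀ (n : ℕ) (x : ℚ),
      B ((w : ℚ) * x) n =
        (w : ℚ) ^ ((n : ℤ) - r) *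
          ∑ j : Fin r → Fin w, B (x + (∑ l, ((j l : ℕ) : ℚ)) / w) n := by
  intro n x
  have hw' : (w : ℚ) ≠ 0 := Nat.cast_ne_zero.2 hw.ne'
  have hcoeff := congrArg (coeff n) (rescale_sum_egf_shift hB hw.ne' x)
  simp only [coeff_rescale, map_sum, coeff_C_mul, coeff_mk, ← mul_sum, ← sum_div,
    mul_div_assoc'] at hcoeff
  rw [div_left_inj' (Nat.cast_ne_zero.2 n.factorial_ne_zero)] at hcoeff
  rw [zpow_sub₀ hw', zpow_natCast, zpow_natCast, div_mul_eq_mul_div, hcoeff,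
    mul_div_cancel_left₀ _ (pow_ne_zero r hw')]

theorem higher_bernoulli_multiplication (r : ℕ) (hr : 0 < r)
    (w : ℕ) (hw : 0 < w) (B : ℚ → ℕ → ℚ)
    (hB : ∀ y : ℚ,
      (PowerSeries.mk fun n => B y n / n.factorial) * (PowerSeries.exp ℚ - 1) ^ r =
        PowerSeries.X ^ r * PowerSeries.mk fun n => y ^ n / n.factorial) :
    ∀ (n : ℕ) (x : ℚ),
      B ((w : ℚ) * x) n =
        (w : ℚ) ^ ((n : ℤ) - r) *
          ∑ j : Fin r → Fin w, B (x + (∑ l, ((j l : ℕ) : ℚ)) / w) n :=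
  higher_bernoulli_multiplication_general r w hw B hB
end

section
/- Let r be a positive integer, λ a real number, and w₁, w₂ positive integers. For each real parameter μ and real y, let (B_{n,μ}^{(r)}(y))_{n≥0} be the higher-order degenerate Bernoulli polynomial values, i.e. the reals determined by (Σ_{n≥0} B_{n,μ}^{(r)}(y) tⁿ/n!)·(exp(L_μ(t)) − 1)^r = L_μ(t)^r·exp(y·L_μ(t)) in ℝ[[t]]. Then for every n ≥ 0 and every real x, w₁^{n−r} · Σ_{j₁,…,j_r=0}^{w₁−1} B_{n,λ/w₁}^{(r)}(w₂x + (w₂/w₁)(j₁+⋯+j_r)) = w₂^{n−r} · Σ_{j₁,…,j_r=0}^{w₂−1} B_{n,λ/w₂}^{(r)}(w₁x + (w₁/w₂)(j₁+⋯+j_r)). -/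
/-!
Write `E c = expPS (C c * Lser λ)`. Substituting `Lser λ` into `e^{aX} e^{bX} = e^{(a+b)X}` gives
`E (a + b) = E a * E b`, and the rescaling `t ↦ w t` turns `Lser (λ / w)` into `C w * Lser λ`.
Rescaling the defining identity at `μ = λ / w` and summing over `j`, the geometric sum
`(∑_{i < w} E v ^ i) * (E v - 1) = E (w v) - 1` yields
`rescale w (∑_j …) * ((E w - 1) (E v - 1)) ^ r = (C w * Lser λ) ^ r * E (w v x) * (E (w v) - 1) ^ r`.
The right side is symmetric in `w, v` up to the factor `w ^ r`; cancelling the nonzero factor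
`((E w - 1) (E v - 1)) ^ r` and comparing coefficients of `t ^ n` gives the identity.
-/

open PowerSeries Finset

lemma coeff_pow_eq_zero_of_lt {R : Type*} [CommRing R] {S : PowerSeries R}
    (hS : constantCoeff S = 0) {n m : ℕ} (h : n < m) : coeff n (S ^ m) = 0 :=
  X_pow_dvd_iff.1 (pow_dvd_pow_of_dvd (X_dvd_iff.2 hS) m) n h

lemma rescale_C {R : Type*} [CommSemiring R] (a c : R) : rescale a (C c) = C c := by
  ext (_ | n) <;> simp [coeff_C]

lemma sum_pow_sum_mul_sub_one_pow {R : Type*} [CommRing R] (U : R) (r w : ℕ) :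
    (∑ j : Fin r → Fin w, U ^ ∑ l, (j l : ℕ)) * (U - 1) ^ r = (U ^ w - 1) ^ r := by
  simp only [← prod_pow_eq_pow_sum]
  rw [← Fintype.sum_pow (fun i : Fin w => U ^ (i : ℕ)), Fin.sum_univ_eq_sum_range (U ^ ·) w,
    ← mul_pow, geom_sum_mul]

lemma expPS_eq_subst {S : PowerSeries ℝ} (hS : constantCoeff S = 0) :
    expPS S = (exp ℝ).subst S := by
  ext n
  rw [coeff_subst' (HasSubst.of_constantCoeff_zero' hS), expPS, coeff_mk,
    finsum_eq_sum_of_support_subset (s := range (n + 1))]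
  · refine sum_congr rfl fun m _ => ?_
    simp [div_eq_inv_mul]
  · intro m hm
    by_contra h
    exact hm (by simp only [coeff_pow_eq_zero_of_lt hS (by simpa using h), smul_zero])

lemma expPS_C_mul_eq_subst {S : PowerSeries ℝ} (hS : constantCoeff S = 0) (c : ℝ) :
    expPS (C c * S) = (rescale c (exp ℝ)).subst S := by
  have hS' : HasSubst S := HasSubst.of_constantCoeff_zero' hS
  rw [expPS_eq_subst (by simp [hS]), rescale_eq_subst,
    subst_comp_subst_apply (HasSubst.smul_X' c) hS', subst_smul hS', subst_X hS', smul_eq_C_mul]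

lemma expPS_C_add_mul {S : PowerSeries ℝ} (hS : constantCoeff S = 0) (a b : ℝ) :
    expPS (C (a + b) * S) = expPS (C a * S) * expPS (C b * S) := by
  simp only [expPS_C_mul_eq_subst hS, ← subst_mul (HasSubst.of_constantCoeff_zero' hS),
    exp_mul_exp_eq_exp_add]

lemma expPS_C_nat_mul {S : PowerSeries ℝ} (hS : constantCoeff S = 0) (k : ℕ) (c : ℝ) :
    expPS (C (k * c) * S) = expPS (C c * S) ^ k := by
  simp only [expPS_C_mul_eq_subst hS, ← subst_pow (HasSubst.of_constantCoeff_zero' hS),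
    ← map_pow, exp_pow_eq_rescale_exp, rescale_rescale]

lemma rescale_expPS (c : ℝ) (S : PowerSeries ℝ) :
    rescale c (expPS S) = expPS (rescale c S) := by
  ext n
  simp only [expPS, coeff_rescale, coeff_mk, mul_sum, ← map_pow, mul_div_assoc]

lemma coeff_one_expPS (S : PowerSeries ℝ) : coeff 1 (expPS S) = coeff 1 S := by
  simp [expPS, sum_range_succ]

lemma constantCoeff_Lser (lam : ℝ) : constantCoeff (Lser lam) = 0 := by
  simp [← coeff_zero_eq_constantCoeff_apply, Lser]

lemma rescale_Lser_div {c : ℝ} (hc : c ≠ 0) (lam : ℝ) :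
    rescale c (Lser (lam / c)) = C c * Lser lam := by
  ext (_ | k)
  · simp [Lser]
  · simp only [Lser, coeff_rescale, coeff_C_mul, coeff_mk, Nat.succ_ne_zero, if_false,
      Nat.add_sub_cancel, div_pow, pow_succ]
    field_simp

lemma expPS_C_mul_Lser_sub_one_ne_zero {c : ℝ} (hc : c ≠ 0) (lam : ℝ) :
    expPS (C c * Lser lam) - 1 ≠ 0 := fun h =>
  hc (by simpa [coeff_one_expPS, coeff_C_mul, Lser, coeff_one] using congrArg (coeff 1) h)

lemma rescale_mul_expPS_sub_one_pow {r : ℕ} {lam c y : ℝ} (hc : c ≠ 0) {G : PowerSeries ℝ}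
    (hG : G * (expPS (Lser (lam / c)) - 1) ^ r =
      Lser (lam / c) ^ r * expPS (C y * Lser (lam / c))) :
    rescale c G * (expPS (C c * Lser lam) - 1) ^ r =
      (C c * Lser lam) ^ r * expPS (C (c * y) * Lser lam) := by
  have h := congrArg (rescale c) hG
  simp only [map_mul, map_pow, map_sub, map_one, rescale_expPS, rescale_C,
    rescale_Lser_div hc] at h
  rwa [← mul_assoc, ← map_mul, mul_comm y] at h

noncomputable def bernoulliSum (r : ℕ) (B : ℝ → ℝ → ℕ → ℝ) (lam : ℝ) (w v : ℕ) (x : ℝ) (n : ℕ) :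
    ℝ :=
  ∑ j : Fin r → Fin w, B (lam / w) ((v : ℝ) * x + ((v : ℝ) / w) * ∑ l, ((j l : ℕ) : ℝ)) n

lemma rescale_bernoulliSum_mul {r : ℕ} {lam : ℝ} {B : ℝ → ℝ → ℕ → ℝ}
    (hB : ∀ μ y : ℝ,
      (mk fun n => B μ y n / n.factorial) * (expPS (Lser μ) - 1) ^ r =
        Lser μ ^ r * expPS (C y * Lser μ))
    {w : ℕ} (hw : 0 < w) (v : ℕ) (x : ℝ) :
    rescale (w : ℝ) (mk fun n => bernoulliSum r B lam w v x n / n.factorial) *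
      ((expPS (C (w : ℝ) * Lser lam) - 1) * (expPS (C (v : ℝ) * Lser lam) - 1)) ^ r =
    (C (w : ℝ) * Lser lam) ^ r *
      (expPS (C ((w : ℝ) * v * x) * Lser lam) * (expPS (C ((w : ℝ) * v) * Lser lam) - 1) ^ r) := by
  have hw0 : (w : ℝ) ≠ 0 := by positivity
  have hL := constantCoeff_Lser lam
  set U := expPS (C (v : ℝ) * Lser lam)
  set y : (Fin r → Fin w) → ℝ := fun j => (v : ℝ) * x + ((v : ℝ) / w) * ∑ l, ((j l : ℕ) : ℝ)
  have hsum : (mk fun n => bernoulliSum r B lam w v x n / n.factorial) =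
      ∑ j, mk fun n => B (lam / w) (y j) n / n.factorial := by
    ext n
    simp [bernoulliSum, y, sum_div]
  have hterm : ∀ j, rescale (w : ℝ) (mk fun n => B (lam / w) (y j) n / n.factorial) *
        (expPS (C (w : ℝ) * Lser lam) - 1) ^ r =
      (C (w : ℝ) * Lser lam) ^ r *
        (expPS (C ((w : ℝ) * v * x) * Lser lam) * U ^ ∑ l, (j l : ℕ)) := by
    intro j
    rw [rescale_mul_expPS_sub_one_pow hw0 (hB _ _), ← expPS_C_nat_mul hL,
      ← expPS_C_add_mul hL]
    congr 4
    simp only [y]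
    push_cast
    field_simp
  calc _ = (∑ j, rescale (w : ℝ) (mk fun n => B (lam / w) (y j) n / n.factorial) *
          (expPS (C (w : ℝ) * Lser lam) - 1) ^ r) * (U - 1) ^ r := by
        rw [hsum, map_sum, mul_pow, ← mul_assoc, sum_mul]
    _ = (C (w : ℝ) * Lser lam) ^ r * (expPS (C ((w : ℝ) * v * x) * Lser lam) *
          ((∑ j : Fin r → Fin w, U ^ ∑ l, (j l : ℕ)) * (U - 1) ^ r)) := by
        simp only [hterm, ← mul_sum, mul_assoc]
    _ = _ := by
        rw [sum_pow_sum_mul_sub_one_pow, ← expPS_C_nat_mul hL]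

theorem higher_degenerate_bernoulli_symmetric_general (r : ℕ) (lam : ℝ)
    (w₁ w₂ : ℕ) (hw₁ : 0 < w₁) (hw₂ : 0 < w₂) (B : ℝ → ℝ → ℕ → ℝ)
    (hB : ∀ μ y : ℝ,
      (PowerSeries.mk fun n => B μ y n / n.factorial) * (expPS (Lser μ) - 1) ^ r =
        Lser μ ^ r * expPS (PowerSeries.C y * Lser μ)) :
    ∀ (n : ℕ) (x : ℝ),
      (w₁ : ℝ) ^ ((n : ℤ) - r) *
          ∑ j : Fin r → Fin w₁,
            B (lam / w₁) ((w₂ : ℝ) * x + ((w₂ : ℝ) / w₁) * ∑ l, ((j l : ℕ) : ℝ)) n =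
        (w₂ : ℝ) ^ ((n : ℤ) - r) *
          ∑ j : Fin r → Fin w₂,
            B (lam / w₂) ((w₁ : ℝ) * x + ((w₁ : ℝ) / w₂) * ∑ l, ((j l : ℕ) : ℝ)) n := by
  intro n x
  have hw₁0 : (w₁ : ℝ) ≠ 0 := by positivity
  have hw₂0 : (w₂ : ℝ) ≠ 0 := by positivity
  have side₁ := rescale_bernoulliSum_mul (lam := lam) hB hw₁ w₂ x
  have side₂ := rescale_bernoulliSum_mul (lam := lam) hB hw₂ w₁ x
  rw [mul_comm (w₂ : ℝ) w₁] at side₂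
  have hne := pow_ne_zero r (mul_ne_zero (expPS_C_mul_Lser_sub_one_ne_zero hw₁0 lam)
    (expPS_C_mul_Lser_sub_one_ne_zero hw₂0 lam))
  have hcancel : C (w₂ : ℝ) ^ r * rescale (w₁ : ℝ)
        (mk fun n => bernoulliSum r B lam w₁ w₂ x n / n.factorial) =
      C (w₁ : ℝ) ^ r * rescale (w₂ : ℝ)
        (mk fun n => bernoulliSum r B lam w₂ w₁ x n / n.factorial) :=
    mul_right_cancel₀ hne
      (by linear_combination C (w₂ : ℝ) ^ r * side₁ - C (w₁ : ℝ) ^ r * side₂)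
  have hcoeff := congrArg (coeff n) hcancel
  simp only [← map_pow, coeff_C_mul, coeff_rescale, coeff_mk] at hcoeff
  change _ * bernoulliSum r B lam w₁ w₂ x n = _ * bernoulliSum r B lam w₂ w₁ x n
  rw [zpow_sub₀ hw₁0, zpow_sub₀ hw₂0, zpow_natCast, zpow_natCast, zpow_natCast, zpow_natCast]
  field_simp at hcoeff ⊢
  linear_combination hcoeff

theorem higher_degenerate_bernoulli_symmetric (r : ℕ) (hr : 0 < r) (lam : ℝ)
    (w₁ w₂ : ℕ) (hw₁ : 0 < w₁) (hw₂ : 0 < w₂) (B : ℝ → ℝ → ℕ → ℝ)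
    (hB : ∀ μ y : ℝ,
      (PowerSeries.mk fun n => B μ y n / n.factorial) * (expPS (Lser μ) - 1) ^ r =
        Lser μ ^ r * expPS (PowerSeries.C y * Lser μ)) :
    ∀ (n : ℕ) (x : ℝ),
      (w₁ : ℝ) ^ ((n : ℤ) - r) *
          ∑ j : Fin r → Fin w₁,
            B (lam / w₁) ((w₂ : ℝ) * x + ((w₂ : ℝ) / w₁) * ∑ l, ((j l : ℕ) : ℝ)) n =
        (w₂ : ℝ) ^ ((n : ℤ) - r) *
          ∑ j : Fin r → Fin w₂,
            B (lam / w₂) ((w₁ : ℝ) * x + ((w₁ : ℝ) / w₂) * ∑ l, ((j l : ℕ) : ℝ)) n :=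
  higher_degenerate_bernoulli_symmetric_general r lam w₁ w₂ hw₁ hw₂ B hB
end
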